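/- Let (h_j) be positive reals with 2^j h_j → 0, let N ≥ 2, and assume |I_T^± ∩ A_j| ≤ 2^{(1−ε)j}. Assume the Gabor decay bound |g_{m,n}(x)| ≤ C_N ⟨|x₁+m₁/2|⟩^{−N}⟨|x₂+m₂/2|⟩^{−N}. Then the cluster coherence of the Gabor system with itself relative to the strip projection P_{M,j} = 1_{{|x₁| ≤ h_j}} satisfies μ_c(Λ_{3,j}, P_{M,j}G; G) ≤ C·2^j h_j → 0 as j → ∞. -/

import Mathlib

open MeasureTheory
open Real

-- decay factor facts
lemma decay_nonneg (t : ℝ) (N : ℕ) : 0 ≤ (1 + t ^ 2) ^ (-(N : ℝ) / 2) := by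
  positivity

lemma decay_le_one (t : ℝ) (N : ℕ) : (1 + t ^ 2) ^ (-(N : ℝ) / 2) ≤ 1 := by
  have hb : (1 : ℝ) ≤ 1 + t ^ 2 := by nlinarith [sq_nonneg t]
  calc (1 + t ^ 2) ^ (-(N : ℝ) / 2) ≤ (1 + t ^ 2) ^ (0 : ℝ) :=
        Real.rpow_le_rpow_of_exponent_le hb
          (by have : (0:ℝ) ≤ (N:ℝ) := Nat.cast_nonneg N; linarith)
    _ = 1 := Real.rpow_zero _

lemma decay_le_inv (t : ℝ) (N : ℕ) (hN : 2 ≤ N) :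
    (1 + t ^ 2) ^ (-(N : ℝ) / 2) ≤ (1 + t ^ 2)⁻¹ := by
  have hb : (1 : ℝ) ≤ 1 + t ^ 2 := by nlinarith [sq_nonneg t]
  have hN' : (2 : ℝ) ≤ N := by exact_mod_cast hN
  calc (1 + t ^ 2) ^ (-(N : ℝ) / 2) ≤ (1 + t ^ 2) ^ (-1 : ℝ) :=
        Real.rpow_le_rpow_of_exponent_le hb (by linarith)
    _ = (1 + t ^ 2)⁻¹ := Real.rpow_neg_one _

/-- single-term bound: integral over the strip of a product of two bounded
functions, one with decay in the second variable. -/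
lemma term_bound (CN h c : ℝ) (hCN : 0 < CN) (hh : 0 < h)
    (u v : ℝ × ℝ → ℝ)
    (hu : ∀ x : ℝ × ℝ, |u x| ≤ CN * (1 + (x.2 + c) ^ 2)⁻¹)
    (hv : ∀ x : ℝ × ℝ, |v x| ≤ CN) :
    |∫ x : ℝ × ℝ, Set.indicator {y : ℝ × ℝ | |y.1| ≤ h} (fun y => u y * v y) x|
      ≤ 2 * π * CN ^ 2 * h := by
  set f : ℝ → ℝ := Set.indicator (Set.Icc (-h) h) (fun _ => CN ^ 2) with hf
  set k : ℝ → ℝ := fun t => (1 + (t + c) ^ 2)⁻¹ with hk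
  have hfint : Integrable f := by
    exact (integrableOn_const (by simp [Real.volume_Icc]) (by simp)).integrable_indicator measurableSet_Icc
  have hkint : Integrable k := by
    have := integrable_inv_one_add_sq.comp_add_right c
    simpa [hk] using this
  have hGint : Integrable (fun z : ℝ × ℝ => f z.1 * k z.2) := hfint.mul_prod hkint
  have hmono : ∀ x : ℝ × ℝ,
      |Set.indicator {y : ℝ × ℝ | |y.1| ≤ h} (fun y => u y * v y) x| ≤ f x.1 * k x.2 := by
    intro x
    by_cases hx : x ∈ {y : ℝ × ℝ | |y.1| ≤ h}
    · rw [Set.indicator_of_mem hx]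
      have hx1 : x.1 ∈ Set.Icc (-h) h := abs_le.mp hx
      have hfx : f x.1 = CN ^ 2 := Set.indicator_of_mem hx1 _
      rw [hfx, abs_mul]
      have h1 := hu x
      have h2 := hv x
      have hknn : 0 ≤ k x.2 := by positivity
      calc |u x| * |v x| ≤ (CN * k x.2) * CN := by
            apply mul_le_mul h1 h2 (abs_nonneg _)
            positivity
        _ = CN ^ 2 * k x.2 := by ring
    · rw [Set.indicator_of_notMem hx]
      simp only [abs_zero]
      have : 0 ≤ f x.1 := by
        apply Set.indicator_nonneg; intro _ _; positivity
      positivity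
  calc |∫ x : ℝ × ℝ, Set.indicator {y : ℝ × ℝ | |y.1| ≤ h} (fun y => u y * v y) x|
      ≤ ∫ x : ℝ × ℝ, |Set.indicator {y : ℝ × ℝ | |y.1| ≤ h} (fun y => u y * v y) x| :=
        by
          simpa [Real.norm_eq_abs] using
            norm_integral_le_integral_norm
              (Set.indicator {y : ℝ × ℝ | |y.1| ≤ h} (fun y => u y * v y))
    _ ≤ ∫ x : ℝ × ℝ, f x.1 * k x.2 := by
        apply integral_mono_of_nonneg
        · exact Filter.Eventually.of_forall fun x => abs_nonneg _
        · exact hGint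
        · exact Filter.Eventually.of_forall hmono
    _ = (∫ t : ℝ, f t) * (∫ t : ℝ, k t) := integral_prod_mul f k
    _ = (CN ^ 2 * (2 * h)) * π := by
        congr 1
        · rw [hf, integral_indicator_const _ measurableSet_Icc]
          rw [measureReal_def, Real.volume_Icc, smul_eq_mul]
          rw [show h - (-h) = 2*h by ring, ENNReal.toReal_ofReal (by linarith : (0:ℝ) ≤ 2*h)]
          ring
        · rw [hk]
          rw [show (fun t : ℝ => (1 + (t + c) ^ 2)⁻¹) = (fun t : ℝ => (1 + t ^ 2)⁻¹) ∘ (fun t => t + c) from rfl]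
          rw [show ((fun t : ℝ => (1 + t ^ 2)⁻¹) ∘ fun t => t + c) = fun t : ℝ => (1 + (t + c) ^ 2)⁻¹ from rfl]
          rw [integral_add_right_eq_self (fun t : ℝ => (1 + t ^ 2)⁻¹) c]
          exact integral_univ_inv_one_add_sq
    _ = 2 * π * CN ^ 2 * h := by ring

lemma card_ball_le (R : ℝ) (hR : 1 ≤ R) (S : Finset (ℤ × ℤ))
    (hS : ∀ p ∈ S, Real.sqrt ((p.1 : ℝ) ^ 2 + (p.2 : ℝ) ^ 2) ≤ R) :
    (S.card : ℝ) ≤ 9 * R * R := by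
  set K : ℤ := ⌊R⌋ with hKdef
  have hK0 : (0 : ℤ) ≤ K := Int.le_floor.mpr (by simpa using le_trans zero_le_one hR)
  have habs : ∀ p ∈ S, |(p.1 : ℝ)| ≤ R ∧ |(p.2 : ℝ)| ≤ R := by
    intro p hp
    have hs := hS p hp
    constructor
    · have h1 : Real.sqrt ((p.1 : ℝ) ^ 2) ≤ Real.sqrt ((p.1 : ℝ) ^ 2 + (p.2 : ℝ) ^ 2) :=
        Real.sqrt_le_sqrt (by nlinarith [sq_nonneg ((p.2 : ℝ))])
      rw [Real.sqrt_sq_eq_abs] at h1; linarith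
    · have h1 : Real.sqrt ((p.2 : ℝ) ^ 2) ≤ Real.sqrt ((p.1 : ℝ) ^ 2 + (p.2 : ℝ) ^ 2) :=
        Real.sqrt_le_sqrt (by nlinarith [sq_nonneg ((p.1 : ℝ))])
      rw [Real.sqrt_sq_eq_abs] at h1; linarith
  have hsub : S ⊆ Finset.Icc (-K) K ×ˢ Finset.Icc (-K) K := by
    intro p hp
    obtain ⟨h1, h2⟩ := habs p hp
    rw [abs_le] at h1 h2
    simp only [Finset.mem_product, Finset.mem_Icc]
    refine ⟨⟨?_, Int.le_floor.mpr h1.2⟩, ⟨?_, Int.le_floor.mpr h2.2⟩⟩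
    · rw [neg_le]; exact Int.le_floor.mpr (by push_cast; linarith [h1.1])
    · rw [neg_le]; exact Int.le_floor.mpr (by push_cast; linarith [h2.1])
  have hcard : S.card ≤ (Finset.Icc (-K) K ×ˢ Finset.Icc (-K) K).card :=
    Finset.card_le_card hsub
  rw [Finset.card_product] at hcard
  have hIcc : ((Finset.Icc (-K) K).card : ℝ) ≤ 3 * R := by
    rw [Int.card_Icc]
    have h0 : ((K + 1 - -K).toNat : ℤ) = K + 1 - -K :=
      Int.toNat_of_nonneg (by omega)
    have h1 : ((K + 1 - -K).toNat : ℝ) = ((K + 1 - -K : ℤ) : ℝ) := by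
      exact_mod_cast congrArg (fun z : ℤ => (z : ℝ)) h0
    rw [h1]
    have hKR : (K : ℝ) ≤ R := Int.floor_le R
    push_cast
    linarith
  calc (S.card : ℝ) ≤ ((Finset.Icc (-K) K).card : ℝ) * ((Finset.Icc (-K) K).card : ℝ) := by
        exact_mod_cast hcard
    _ ≤ (3 * R) * (3 * R) := by
        apply mul_le_mul hIcc hIcc (Nat.cast_nonneg _) (by linarith)
    _ = 9 * R * R := by ring


/-- Cluster coherence of the Gabor system with itself relative to the strip projection
`P_{M,j} = 1_{{|x₁| ≤ h_j}}`: under the Gabor decay bound and the cardinality bound on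
`I_T^± ∩ A_j`, one has `μ_c(Λ_{3,j}, P_{M,j} G; G) ≤ C · 2^j h_j → 0`. -/
theorem gabor_strip_cluster_coherence (ε : ℝ) (hε : 0 < ε) (hε' : ε < 1 / 4)
    (h : ℕ → ℝ) (hpos : ∀ j, 0 < h j)
    (hj0 : Filter.Tendsto (fun j : ℕ => (2 : ℝ) ^ (j : ℝ) * h j) Filter.atTop (nhds 0))
    (N : ℕ) (hN : 2 ≤ N) (CN : ℝ) (hCN : 0 < CN)
    (g : ℤ × ℤ → ℤ × ℤ → ℝ × ℝ → ℝ)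
    (hg : ∀ (m n : ℤ × ℤ) (x : ℝ × ℝ),
      |g m n x| ≤ CN * (1 + (x.1 + (m.1 : ℝ) / 2) ^ 2) ^ (-(N : ℝ) / 2)
        * (1 + (x.2 + (m.2 : ℝ) / 2) ^ 2) ^ (-(N : ℝ) / 2))
    (B ITA : ℕ → Finset (ℤ × ℤ))
    (hB : ∀ j p, p ∈ B j ↔
      Real.sqrt ((p.1 : ℝ) ^ 2 + (p.2 : ℝ) ^ 2) ≤ (2 : ℝ) ^ (ε * (j : ℝ) / 6))
    (hITA : ∀ j, ((ITA j).card : ℝ) ≤ (2 : ℝ) ^ ((1 - ε) * (j : ℝ))) :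
    ∃ C > 0, (∀ (j : ℕ) (m' n' : ℤ × ℤ),
        ∑ p ∈ (B j) ×ˢ (ITA j),
          |∫ x : ℝ × ℝ,
            Set.indicator {y : ℝ × ℝ | |y.1| ≤ h j}
              (fun y => g p.1 p.2 y * g m' n' y) x|
          ≤ C * (2 : ℝ) ^ (j : ℝ) * h j) ∧
      Filter.Tendsto (fun j : ℕ => C * (2 : ℝ) ^ (j : ℝ) * h j)
        Filter.atTop (nhds 0) := by
  have hπ := Real.pi_pos
  refine ⟨18 * π * CN ^ 2, by positivity, ?_, ?_⟩
  · intro j m' n'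
    set R : ℝ := (2 : ℝ) ^ (ε * (j : ℝ) / 6) with hRdef
    have hjnn : (0 : ℝ) ≤ (j : ℝ) := Nat.cast_nonneg j
    have hεj : 0 ≤ ε * (j : ℝ) := mul_nonneg hε.le hjnn
    have hR1 : (1 : ℝ) ≤ R := by
      rw [hRdef, show (1 : ℝ) = (2 : ℝ) ^ (0 : ℝ) from (Real.rpow_zero 2).symm]
      exact Real.rpow_le_rpow_of_exponent_le one_le_two (by linarith)
    have hcardB : ((B j).card : ℝ) ≤ 9 * R * R :=
      card_ball_le R hR1 (B j) (fun p hp => (hB j p).mp hp)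
    -- per-term bound
    have hterm : ∀ p ∈ (B j) ×ˢ (ITA j),
        |∫ x : ℝ × ℝ, Set.indicator {y : ℝ × ℝ | |y.1| ≤ h j}
            (fun y => g p.1 p.2 y * g m' n' y) x| ≤ 2 * π * CN ^ 2 * h j := by
      intro p _
      apply term_bound CN (h j) ((p.1.2 : ℝ) / 2) hCN (hpos j)
      · intro x
        have h1 := hg p.1 p.2 x
        have hA := decay_le_one (x.1 + (p.1.1 : ℝ) / 2) N
        have hA0 := decay_nonneg (x.1 + (p.1.1 : ℝ) / 2) N
        have hBd := decay_le_inv (x.2 + (p.1.2 : ℝ) / 2) N hN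
        have hB0 := decay_nonneg (x.2 + (p.1.2 : ℝ) / 2) N
        have hI0 : (0 : ℝ) ≤ (1 + (x.2 + (p.1.2 : ℝ) / 2) ^ 2)⁻¹ := by positivity
        calc |g p.1 p.2 x| ≤ CN * (1 + (x.1 + (p.1.1 : ℝ) / 2) ^ 2) ^ (-(N : ℝ) / 2)
              * (1 + (x.2 + (p.1.2 : ℝ) / 2) ^ 2) ^ (-(N : ℝ) / 2) := h1
          _ ≤ CN * 1 * (1 + (x.2 + (p.1.2 : ℝ) / 2) ^ 2)⁻¹ := by
              apply mul_le_mul (mul_le_mul_of_nonneg_left hA hCN.le) hBd hB0 (by positivity)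
          _ = CN * (1 + (x.2 + (p.1.2 : ℝ) / 2) ^ 2)⁻¹ := by ring
      · intro x
        have h1 := hg m' n' x
        have hA := decay_le_one (x.1 + (m'.1 : ℝ) / 2) N
        have hA0 := decay_nonneg (x.1 + (m'.1 : ℝ) / 2) N
        have hBd := decay_le_one (x.2 + (m'.2 : ℝ) / 2) N
        have hB0 := decay_nonneg (x.2 + (m'.2 : ℝ) / 2) N
        calc |g m' n' x| ≤ CN * (1 + (x.1 + (m'.1 : ℝ) / 2) ^ 2) ^ (-(N : ℝ) / 2)
              * (1 + (x.2 + (m'.2 : ℝ) / 2) ^ 2) ^ (-(N : ℝ) / 2) := h1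
          _ ≤ CN * 1 * 1 := by
              apply mul_le_mul (mul_le_mul_of_nonneg_left hA hCN.le) hBd hB0 (by positivity)
          _ = CN := by ring
    have hsum := Finset.sum_le_card_nsmul _ _ _ hterm
    rw [nsmul_eq_mul] at hsum
    have hcardprod : ((((B j) ×ˢ (ITA j)).card : ℕ) : ℝ)
        ≤ (9 * R * R) * (2 : ℝ) ^ ((1 - ε) * (j : ℝ)) := by
      rw [Finset.card_product]
      push_cast
      have h2 : (0 : ℝ) ≤ (2 : ℝ) ^ ((1 - ε) * (j : ℝ)) := by positivity
      exact mul_le_mul hcardB (hITA j) (Nat.cast_nonneg _) (by nlinarith)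
    have hRR : (9 * R * R) * (2 : ℝ) ^ ((1 - ε) * (j : ℝ)) ≤ 9 * (2 : ℝ) ^ ((j : ℝ)) := by
      have hmul : R * R * (2 : ℝ) ^ ((1 - ε) * (j : ℝ))
          = (2 : ℝ) ^ (ε * (j : ℝ) / 6 + ε * (j : ℝ) / 6 + (1 - ε) * (j : ℝ)) := by
        rw [hRdef, ← Real.rpow_add two_pos, ← Real.rpow_add two_pos]
      have hexp : ε * (j : ℝ) / 6 + ε * (j : ℝ) / 6 + (1 - ε) * (j : ℝ) ≤ (j : ℝ) := by
        nlinarith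
      have := Real.rpow_le_rpow_of_exponent_le one_le_two hexp
      calc (9 * R * R) * (2 : ℝ) ^ ((1 - ε) * (j : ℝ))
          = 9 * (R * R * (2 : ℝ) ^ ((1 - ε) * (j : ℝ))) := by ring
        _ = 9 * (2 : ℝ) ^ (ε * (j : ℝ) / 6 + ε * (j : ℝ) / 6 + (1 - ε) * (j : ℝ)) := by
            rw [hmul]
        _ ≤ 9 * (2 : ℝ) ^ ((j : ℝ)) := by linarith
    have hb0 : (0 : ℝ) < 2 * π * CN ^ 2 * h j := by
      have := hpos j; positivity
    calc ∑ p ∈ (B j) ×ˢ (ITA j),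
          |∫ x : ℝ × ℝ, Set.indicator {y : ℝ × ℝ | |y.1| ≤ h j}
            (fun y => g p.1 p.2 y * g m' n' y) x|
        ≤ ((((B j) ×ˢ (ITA j)).card : ℕ) : ℝ) * (2 * π * CN ^ 2 * h j) := hsum
      _ ≤ ((9 * R * R) * (2 : ℝ) ^ ((1 - ε) * (j : ℝ))) * (2 * π * CN ^ 2 * h j) :=
          mul_le_mul_of_nonneg_right hcardprod hb0.le
      _ ≤ (9 * (2 : ℝ) ^ ((j : ℝ))) * (2 * π * CN ^ 2 * h j) :=
          mul_le_mul_of_nonneg_right hRR hb0.le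
      _ = 18 * π * CN ^ 2 * (2 : ℝ) ^ ((j : ℝ)) * h j := by ring
  · have := hj0.const_mul (18 * π * CN ^ 2)
    simpa [mul_assoc] using this
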